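/- Let f : ℝ³ → ℝ be nowhere zero and a : ℝ³ → ℝ arbitrary. Define on ℝ³ × ℝ³ (coordinates (q₁,q₂,q₃,p₁,p₂,p₃)) the matrix Ω(q,p) = [[0, −(1/f(p))·I₃],[(1/f(p))·I₃, (1/f(p)²)·L]] in 3×3 blocks with L_{ij} = a(p)·ε_{ijk}·J_k and J_k = (1/f(p))·ε_{klm} q_l p_m, and let Φ : (0,∞) × ℝ × [0,π] × [0,2π) → ℝ⁶ be the parametrization Φ(r,ρ,θ,φ) = (r·sinθ·cosφ, r·sinθ·sinφ, r·cosθ, ρ·sinθ·cosφ, ρ·sinθ·sinφ, ρ·cosθ) of the constraint surface q × p = 0. Then for every (r,ρ,θ,φ) and all u, v ∈ ℝ⁴ (components ordered (u_r, u_ρ, u_θ, u_φ)): (DΦ·u)ᵀ · Ω(Φ) · (DΦ·v) = (1/f(Φ_p)) · (u_ρ·v_r − u_r·v_ρ), where Φ_p = (ρ·sinθ·cosφ, ρ·sinθ·sinφ, ρ·cosθ). That is, the pullback of the deformed symplectic form to the constraint surface equals (1/f(ρ)) dρ ∧ dr, and hence the reduced symplectic form on M ⫽ SO(3) in the natural coordinates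 (r,ρ) is ω̃ = (1/f(ρ)) dρ ∧ dr. -/

import Mathlib

open Matrix

/-- Deformed angular momentum vector `J_k(q,p) = (1/f(p))·ε_{klm} q_l p_m` on the phase space
`ℝ⁶` with coordinates `(q₁,q₂,q₃,p₁,p₂,p₃)`. -/
noncomputable def J3fun (f : (Fin 3 → ℝ) → ℝ) (x : Fin 6 → ℝ) : Fin 3 → ℝ :=
  (f ![x 3, x 4, x 5])⁻¹ • crossProduct ![x 0, x 1, x 2] ![x 3, x 4, x 5]

/-- Matrix of the deformed symplectic form of the three-dimensional rotationally invariant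
(Maggiore-type) GUP theory: block form `[[0, −(1/f)·I₃],[(1/f)·I₃, (1/f²)·L]]` with
`L_{ij} = a(p)·ε_{ijk}·J_k`. -/
noncomputable def Omega3 (f a : (Fin 3 → ℝ) → ℝ) (x : Fin 6 → ℝ) : Matrix (Fin 6) (Fin 6) ℝ :=
  let p : Fin 3 → ℝ := ![x 3, x 4, x 5]
  let J : Fin 3 → ℝ := J3fun f x
  let g : ℝ := (f p)⁻¹
  let b : ℝ := a p / (f p) ^ 2
  !![0, 0, 0, -g, 0, 0;
     0, 0, 0, 0, -g, 0;
     0, 0, 0, 0, 0, -g;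
     g, 0, 0, 0, b * J 2, -(b * J 1);
     0, g, 0, -(b * J 2), 0, b * J 0;
     0, 0, g, b * J 1, -(b * J 0), 0]

/-- Spherical parametrization
`Φ(r,ρ,θ,φ) = (r·sinθ·cosφ, r·sinθ·sinφ, r·cosθ, ρ·sinθ·cosφ, ρ·sinθ·sinφ, ρ·cosθ)` of the
constraint surface `q × p = 0`. -/
noncomputable def Phi3 (y : Fin 4 → ℝ) : Fin 6 → ℝ :=
  ![y 0 * Real.sin (y 2) * Real.cos (y 3), y 0 * Real.sin (y 2) * Real.sin (y 3),
    y 0 * Real.cos (y 2),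
    y 1 * Real.sin (y 2) * Real.cos (y 3), y 1 * Real.sin (y 2) * Real.sin (y 3),
    y 1 * Real.cos (y 2)]

/-! On the image of `Φ` both `q` and `p` are multiples of the radial unit vector `n(θ,φ)`, so
`J = 0` and `Ω` reduces to `(1/f)·[[0,−I],[I,0]]`, whose pairing is `(1/f)(ξ_p·η_q − ξ_q·η_p)`.
The `q`- and `p`-parts of `DΦ·u` are `u_r n + r ∂n(u)` and `u_ρ n + ρ ∂n(u)`, where `∂n(u) ⟂ n`
and `|n| = 1`; the two `r ρ ∂n(u)·∂n(v)` terms cancel, leaving `u_ρ v_r − u_r v_ρ`. -/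

open Real

namespace PhaseSpace

def position (x : Fin 6 → ℝ) : Fin 3 → ℝ := ![x 0, x 1, x 2]

def momentum (x : Fin 6 → ℝ) : Fin 3 → ℝ := ![x 3, x 4, x 5]

end PhaseSpace

open PhaseSpace

theorem dotProduct_Omega3_mulVec_of_J3fun_eq_zero {f a : (Fin 3 → ℝ) → ℝ} {x : Fin 6 → ℝ}
    (hJ : J3fun f x = 0) (ξ η : Fin 6 → ℝ) :
    ξ ⬝ᵥ Omega3 f a x *ᵥ η =
      (f (momentum x))⁻¹ * (momentum ξ ⬝ᵥ position η - position ξ ⬝ᵥ momentum η) := by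
  simp only [Omega3, hJ, Pi.zero_apply, mul_zero, neg_zero, mulVec, dotProduct, Fin.sum_univ_six,
    Fin.sum_univ_three, of_apply, cons_val, position, momentum]
  ring

noncomputable def sphericalUnit (θ φ : ℝ) : Fin 3 → ℝ :=
  ![sin θ * cos φ, sin θ * sin φ, cos θ]

noncomputable def sphericalUnitDeriv (θ φ dθ dφ : ℝ) : Fin 3 → ℝ :=
  ![cos θ * cos φ * dθ - sin θ * sin φ * dφ, cos θ * sin φ * dθ + sin θ * cos φ * dφ,
    -(sin θ * dθ)]

theorem sphericalUnit_dotProduct_self (θ φ : ℝ) : sphericalUnit θ φ ⬝ᵥ sphericalUnit θ φ = 1 := by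
  simp only [sphericalUnit, dotProduct, Fin.sum_univ_three, cons_val_zero, cons_val_one,
    cons_val_two, head_cons, tail_cons]
  linear_combination sin θ ^ 2 * sin_sq_add_cos_sq φ + sin_sq_add_cos_sq θ

theorem sphericalUnit_dotProduct_sphericalUnitDeriv (θ φ dθ dφ : ℝ) :
    sphericalUnit θ φ ⬝ᵥ sphericalUnitDeriv θ φ dθ dφ = 0 := by
  simp only [sphericalUnit, sphericalUnitDeriv, dotProduct, Fin.sum_univ_three, cons_val_zero,
    cons_val_one, cons_val_two, head_cons, tail_cons]
  linear_combination sin θ * cos θ * dθ * sin_sq_add_cos_sq φ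

theorem position_Phi3 (y : Fin 4 → ℝ) : position (Phi3 y) = y 0 • sphericalUnit (y 2) (y 3) := by
  ext k; fin_cases k <;> simp [position, Phi3, sphericalUnit, mul_assoc]

theorem momentum_Phi3 (y : Fin 4 → ℝ) : momentum (Phi3 y) = y 1 • sphericalUnit (y 2) (y 3) := by
  ext k; fin_cases k <;> simp [momentum, Phi3, sphericalUnit, mul_assoc]

theorem J3fun_Phi3 (f : (Fin 3 → ℝ) → ℝ) (y : Fin 4 → ℝ) : J3fun f (Phi3 y) = 0 := by
  change (f (momentum (Phi3 y)))⁻¹ • position (Phi3 y) ⨯₃ momentum (Phi3 y) = 0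
  rw [position_Phi3, momentum_Phi3, LinearMap.map_smul₂, map_smul, cross_self, smul_zero,
    smul_zero, smul_zero]

theorem differentiable_Phi3 : Differentiable ℝ Phi3 := by
  refine differentiable_pi'' fun i => ?_
  fin_cases i <;> simp [Phi3] <;> fun_prop

theorem fderiv_Phi3_apply_apply (y u : Fin 4 → ℝ) (i : Fin 6) :
    fderiv ℝ Phi3 y u i = fderiv ℝ (fun y => Phi3 y i) y u := by
  rw [fderiv_apply (differentiable_Phi3 y)]; rfl

theorem position_fderiv_Phi3 (y u : Fin 4 → ℝ) :
    position (fderiv ℝ Phi3 y u) =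
      u 0 • sphericalUnit (y 2) (y 3) + y 0 • sphericalUnitDeriv (y 2) (y 3) (u 2) (u 3) := by
  ext k
  fin_cases k <;>
  · simp (disch := fun_prop) only [position, fderiv_Phi3_apply_apply, Phi3, sphericalUnit,
      sphericalUnitDeriv, Fin.zero_eta, Fin.mk_one, Fin.reduceFinMk, cons_val, fderiv_fun_mul,
      fderiv_sin, fderiv_cos, (hasFDerivAt_apply _ _).fderiv, _root_.add_apply, _root_.smul_apply,
      ContinuousLinearMap.proj_apply, smul_eq_mul, Pi.add_apply, Pi.smul_apply]
    ring

theorem momentum_fderiv_Phi3 (y u : Fin 4 → ℝ) :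
    momentum (fderiv ℝ Phi3 y u) =
      u 1 • sphericalUnit (y 2) (y 3) + y 1 • sphericalUnitDeriv (y 2) (y 3) (u 2) (u 3) := by
  ext k
  fin_cases k <;>
  · simp (disch := fun_prop) only [momentum, fderiv_Phi3_apply_apply, Phi3, sphericalUnit,
      sphericalUnitDeriv, Fin.zero_eta, Fin.mk_one, Fin.reduceFinMk, cons_val, fderiv_fun_mul,
      fderiv_sin, fderiv_cos, (hasFDerivAt_apply _ _).fderiv, _root_.add_apply, _root_.smul_apply,
      ContinuousLinearMap.proj_apply, smul_eq_mul, Pi.add_apply, Pi.smul_apply]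
    ring

theorem smul_add_smul_dotProduct_sub_of_orthonormal {ι R : Type*} [Fintype ι] [CommRing R]
    {n a b : ι → R} (hn : n ⬝ᵥ n = 1) (ha : n ⬝ᵥ a = 0) (hb : n ⬝ᵥ b = 0) (r ρ s₀ s₁ t₀ t₁ : R) :
    (s₁ • n + ρ • a) ⬝ᵥ (t₀ • n + r • b) - (s₀ • n + r • a) ⬝ᵥ (t₁ • n + ρ • b) =
      s₁ * t₀ - s₀ * t₁ := by
  simp only [add_dotProduct, dotProduct_add, smul_dotProduct, dotProduct_smul, smul_eq_mul,
    dotProduct_comm a n, hn, ha, hb]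
  ring

theorem stmt_15_general (f a : (Fin 3 → ℝ) → ℝ) :
    ∀ y : Fin 4 → ℝ, 0 < y 0 → y 2 ∈ Set.Icc 0 Real.pi →
      y 3 ∈ Set.Ico 0 (2 * Real.pi) → ∀ u v : Fin 4 → ℝ,
      (fderiv ℝ Phi3 y u) ⬝ᵥ (Omega3 f a (Phi3 y)).mulVec (fderiv ℝ Phi3 y v) =
        (1 / f ![y 1 * Real.sin (y 2) * Real.cos (y 3),
                 y 1 * Real.sin (y 2) * Real.sin (y 3),
                 y 1 * Real.cos (y 2)]) * (u 1 * v 0 - u 0 * v 1) := by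
  intro y _ _ _ u v
  rw [dotProduct_Omega3_mulVec_of_J3fun_eq_zero (J3fun_Phi3 f y), position_fderiv_Phi3,
    momentum_fderiv_Phi3, position_fderiv_Phi3, momentum_fderiv_Phi3,
    smul_add_smul_dotProduct_sub_of_orthonormal (sphericalUnit_dotProduct_self _ _)
      (sphericalUnit_dotProduct_sphericalUnitDeriv _ _ _ _)
      (sphericalUnit_dotProduct_sphericalUnitDeriv _ _ _ _), one_div]
  rfl

/-- The pullback of the deformed symplectic form of the three-dimensional rotationally
invariant GUP theory to the constraint surface equals `(1/f(ρ)) dρ ∧ dr`: for all tangent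
vectors `u, v`, `(DΦ·u)ᵀ·Ω(Φ)·(DΦ·v) = (1/f(Φ_p))·(u_ρ·v_r − u_r·v_ρ)`. Hence the reduced
symplectic form on `M ⫽ SO(3)` in the natural coordinates `(r,ρ)` is `ω̃ = (1/f(ρ)) dρ∧dr`. -/
theorem stmt_15 (f a : (Fin 3 → ℝ) → ℝ) (hf0 : ∀ p, f p ≠ 0) :
    ∀ y : Fin 4 → ℝ, 0 < y 0 → y 2 ∈ Set.Icc 0 Real.pi →
      y 3 ∈ Set.Ico 0 (2 * Real.pi) → ∀ u v : Fin 4 → ℝ,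
      (fderiv ℝ Phi3 y u) ⬝ᵥ (Omega3 f a (Phi3 y)).mulVec (fderiv ℝ Phi3 y v) =
        (1 / f ![y 1 * Real.sin (y 2) * Real.cos (y 3),
                 y 1 * Real.sin (y 2) * Real.sin (y 3),
                 y 1 * Real.cos (y 2)]) * (u 1 * v 0 - u 0 * v 1) :=
  stmt_15_general f a
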